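/- Let φ : L^0 → L^0 be a map such that: (1) φ has the local property, i.e., Ĩ_A φ(Ĩ_A ξ) = Ĩ_A φ(ξ) for all ξ ∈ L^0 and A ∈ F; (2) φ(ξ + η) = φ(ξ) + φ(η) for all ξ, η ∈ L^0; (3) φ(ξη) = φ(ξ)φ(η) for all ξ, η ∈ L^0; (4) φ(1) = 1. Then φ is the identity map, i.e., φ(ξ) = ξ for all ξ ∈ L^0. -/
import Mathlib

/-!
Statements from "The fundamental theorem of affine geometry in `(L⁰)ⁿ`" (Wu–Long).

`L⁰`, the algebra of equivalence classes (under `P`-a.e. equality) of real valued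
random variables on a probability space `(Ω, F, P)`, is modeled as `Ω →ₘ[P] ℝ`,
and `(L⁰)ⁿ` as `Fin n → (Ω →ₘ[P] ℝ)` with the pointwise `L⁰`-module structure.
-/

open MeasureTheory

noncomputable section

variable {Ω : Type*} [MeasurableSpace Ω] {P : Measure Ω}

/-- `L⁰ = Ω →ₘ[P] ℝ` is a commutative ring under the pointwise a.e. operations. -/
instance : CommRing (Ω →ₘ[P] ℝ) :=
  { (inferInstance : AddCommGroup (Ω →ₘ[P] ℝ)),
    (inferInstance : CommMonoid (Ω →ₘ[P] ℝ)) with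
    left_distrib := fun a b c => AEEqFun.toGerm_injective <| by
      simp only [AEEqFun.mul_toGerm, AEEqFun.add_toGerm, mul_add]
    right_distrib := fun a b c => AEEqFun.toGerm_injective <| by
      simp only [AEEqFun.mul_toGerm, AEEqFun.add_toGerm, add_mul]
    zero_mul := fun a => AEEqFun.toGerm_injective <| by
      simp only [AEEqFun.mul_toGerm, AEEqFun.zero_toGerm, zero_mul]
    mul_zero := fun a => AEEqFun.toGerm_injective <| by
      simp only [AEEqFun.mul_toGerm, AEEqFun.zero_toGerm, mul_zero] }

/-- `Ĩ_A` : the equivalence class of the indicator function of a measurable set `A`. -/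
def ind (P : Measure Ω) {A : Set Ω} (hA : MeasurableSet A) : Ω →ₘ[P] ℝ :=
  AEEqFun.mk (A.indicator fun _ => (1 : ℝ)) (aestronglyMeasurable_const.indicator hA)

lemma coeFn_ind {A : Set Ω} (hA : MeasurableSet A) :
    ⇑(ind P hA) =ᵐ[P] A.indicator fun _ => (1 : ℝ) :=
  AEEqFun.coeFn_mk _ _

/-- constants in `L⁰` -/
def cst (P : Measure Ω) (r : ℝ) : Ω →ₘ[P] ℝ := AEEqFun.const Ω r

lemma coeFn_cst (r : ℝ) : ⇑(cst P r) =ᵐ[P] fun _ => r := AEEqFun.coeFn_mk _ _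

lemma cst_mul (a b : ℝ) : cst P a * cst P b = cst P (a * b) :=
  AEEqFun.ext <| by
    filter_upwards [AEEqFun.coeFn_mul (cst P a) (cst P b), coeFn_cst (P := P) a,
      coeFn_cst (P := P) b, coeFn_cst (P := P) (a * b)] with ω h1 h2 h3 h4
    simp [h1, h2, h3, h4]

lemma cst_add (a b : ℝ) : cst P a + cst P b = cst P (a + b) :=
  AEEqFun.ext <| by
    filter_upwards [AEEqFun.coeFn_add (cst P a) (cst P b), coeFn_cst (P := P) a,
      coeFn_cst (P := P) b, coeFn_cst (P := P) (a + b)] with ω h1 h2 h3 h4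
    simp [h1, h2, h3, h4]

lemma cst_one : cst P 1 = 1 := rfl

lemma cst_zero : cst P 0 = 0 := rfl

lemma ind_compl {A : Set Ω} (hA : MeasurableSet A) :
    ind P hA.compl = 1 - ind P hA :=
  AEEqFun.ext <| by
    filter_upwards [coeFn_ind hA.compl, AEEqFun.coeFn_sub (1 : Ω →ₘ[P] ℝ) (ind P hA),
      AEEqFun.coeFn_one (β := ℝ) (μ := P), coeFn_ind hA] with ω h1 h2 h3 h4
    rw [h1, h2, Pi.sub_apply, h3, h4]
    by_cases hω : ω ∈ A <;> simp [hω]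

/-- nonnegative elements of `L⁰` are squares -/
lemma exists_sq {f : Ω →ₘ[P] ℝ} (hf : ∀ᵐ ω ∂P, 0 ≤ f ω) :
    ∃ g : Ω →ₘ[P] ℝ, g * g = f := by
  refine ⟨AEEqFun.comp Real.sqrt Real.continuous_sqrt f, AEEqFun.ext ?_⟩
  filter_upwards [AEEqFun.coeFn_mul (AEEqFun.comp Real.sqrt Real.continuous_sqrt f)
    (AEEqFun.comp Real.sqrt Real.continuous_sqrt f),
    AEEqFun.coeFn_comp Real.sqrt Real.continuous_sqrt f, hf] with ω h1 h2 h3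
  rw [h1, Pi.mul_apply, h2]
  exact Real.mul_self_sqrt h3

/-- Lemma 3.2: a map `φ : L⁰ → L⁰` with the local property which is
additive, multiplicative and satisfies `φ 1 = 1` is the identity map. -/
theorem ring_selfmap_eq_id
    [IsProbabilityMeasure P] (φ : (Ω →ₘ[P] ℝ) → (Ω →ₘ[P] ℝ))
    (hloc : ∀ (ξ : Ω →ₘ[P] ℝ) (A : Set Ω) (hA : MeasurableSet A),
        ind P hA * φ (ind P hA * ξ) = ind P hA * φ ξ)
    (hadd : ∀ ξ η : Ω →ₘ[P] ℝ, φ (ξ + η) = φ ξ + φ η)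
    (hmul : ∀ ξ η : Ω →ₘ[P] ℝ, φ (ξ * η) = φ ξ * φ η)
    (hone : φ 1 = 1) :
    ∀ ξ : Ω →ₘ[P] ℝ, φ ξ = ξ := by
  have hzero : φ 0 = 0 := by
    have h := hadd 0 0
    rw [add_zero] at h
    linear_combination -h
  have hneg : ∀ ξ : Ω →ₘ[P] ℝ, φ (-ξ) = -φ ξ := by
    intro ξ
    have h := hadd ξ (-ξ)
    rw [add_neg_cancel, hzero] at h
    linear_combination -h
  -- φ fixes natural number constants
  have hnat : ∀ n : ℕ, φ (cst P n) = cst P n := by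
    intro n
    induction n with
    | zero => simpa [cst_zero] using hzero
    | succ n ih =>
      have e : (cst P ((n : ℕ) + 1 : ℕ)) = cst P n + cst P 1 := by
        rw [cst_add]; norm_num
      rw [e, hadd, ih, cst_one, hone]
  -- φ fixes integer constants
  have hint : ∀ n : ℤ, φ (cst P n) = cst P n := by
    have hcn : ∀ r : ℝ, cst P (-r) = -cst P r := by
      intro r
      have hc0 : cst P r + cst P (-r) = 0 := by
        rw [cst_add, add_neg_cancel, cst_zero]
      linear_combination hc0
    intro n
    rcases n with m | m
    · simpa using hnat m
    · have e : ((Int.negSucc m : ℤ) : ℝ) = -((m + 1 : ℕ) : ℝ) := by push_cast; ring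
      rw [e, hcn, hneg, hnat]
  -- φ fixes rational constants
  have hrat : ∀ q : ℚ, φ (cst P q) = cst P q := by
    intro q
    have hden : ((q.den : ℝ)) ≠ 0 := Nat.cast_ne_zero.mpr q.den_pos.ne'
    have hqd : (q : ℝ) * (q.den : ℝ) = (q.num : ℝ) := by
      rw [Rat.cast_def]
      field_simp
    have h1 : φ (cst P q) * cst P q.den = cst P q.num := by
      calc φ (cst P q) * cst P q.den = φ (cst P q) * φ (cst P q.den) := by rw [hnat]
        _ = φ (cst P q * cst P q.den) := (hmul _ _).symm
        _ = φ (cst P ((q : ℝ) * (q.den : ℝ))) := by rw [cst_mul]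
        _ = φ (cst P (q.num : ℝ)) := by rw [hqd]
        _ = cst P q.num := hint q.num
    have h2 : cst P (q.den : ℝ) * cst P ((q.den : ℝ)⁻¹) = 1 := by
      rw [cst_mul, mul_inv_cancel₀ hden, cst_one]
    calc φ (cst P q) = φ (cst P q) * (cst P (q.den : ℝ) * cst P ((q.den : ℝ)⁻¹)) := by
          rw [h2, mul_one]
      _ = (φ (cst P q) * cst P q.den) * cst P ((q.den : ℝ)⁻¹) := by ring
      _ = cst P q.num * cst P ((q.den : ℝ)⁻¹) := by rw [h1]
      _ = cst P ((q.num : ℝ) * (q.den : ℝ)⁻¹) := cst_mul _ _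
      _ = cst P q := by congr 1; rw [Rat.cast_def, div_eq_mul_inv]
  -- φ fixes indicator functions
  have hindfix : ∀ (A : Set Ω) (hA : MeasurableSet A), φ (ind P hA) = ind P hA := by
    intro A hA
    have h1 := hloc 1 A hA
    rw [mul_one, hone, mul_one] at h1
    have h2 := hloc 1 Aᶜ hA.compl
    rw [mul_one, hone, mul_one, ind_compl hA] at h2
    have h3 : φ (1 - ind P hA) = 1 - φ (ind P hA) := by
      have h := hadd (1 - ind P hA) (ind P hA)
      have e : (1 - ind P hA) + ind P hA = 1 := by ring
      rw [e, hone] at h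
      linear_combination -h
    rw [h3] at h2
    linear_combination h1 - h2
  -- φ is monotone
  have hmono : ∀ ξ η : Ω →ₘ[P] ℝ, (∀ᵐ ω ∂P, ξ ω ≤ η ω) → ∀ᵐ ω ∂P, φ ξ ω ≤ φ η ω := by
    intro ξ η h
    have hd : ∀ᵐ ω ∂P, 0 ≤ (η - ξ) ω := by
      filter_upwards [h, AEEqFun.coeFn_sub η ξ] with ω h1 h2
      rw [h2, Pi.sub_apply]
      linarith
    obtain ⟨ζ, hζ⟩ := exists_sq hd
    have heq : φ η = φ ξ + φ ζ * φ ζ := by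
      have h' := hadd ξ (η - ξ)
      have e : ξ + (η - ξ) = η := by ring
      rw [e] at h'
      rw [← hmul ζ ζ, hζ]
      exact h'
    filter_upwards [AEEqFun.coeFn_add (φ ξ) (φ ζ * φ ζ), AEEqFun.coeFn_mul (φ ζ) (φ ζ)]
      with ω h1 h2
    rw [heq, h1, Pi.add_apply, h2, Pi.mul_apply]
    nlinarith [mul_self_nonneg (φ ζ ω)]
  -- key step : on {ξ ≤ q}, φ ξ ≤ q a.e.
  have key : ∀ (ξ : Ω →ₘ[P] ℝ) (q : ℚ), ∀ᵐ ω ∂P, ξ ω ≤ (q : ℝ) → φ ξ ω ≤ (q : ℝ) := by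
    intro ξ q
    have hA : MeasurableSet (⇑ξ ⁻¹' Set.Iic (q : ℝ)) := ξ.measurable measurableSet_Iic
    set A : Set Ω := ⇑ξ ⁻¹' Set.Iic (q : ℝ) with hAdef
    have h1 : ∀ᵐ ω ∂P, (ind P hA * ξ) ω ≤ (cst P q * ind P hA) ω := by
      filter_upwards [AEEqFun.coeFn_mul (ind P hA) ξ, AEEqFun.coeFn_mul (cst P q) (ind P hA),
        coeFn_ind hA, coeFn_cst (P := P) (q : ℝ)] with ω e1 e2 e3 e4
      rw [e1, e2, Pi.mul_apply, Pi.mul_apply, e3, e4]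
      by_cases hω : ω ∈ A
      · have : ξ ω ≤ (q : ℝ) := hω
        simp only [Set.indicator_of_mem hω]
        simpa using this
      · simp [Set.indicator_of_notMem hω]
    have h2 := hmono _ _ h1
    have hfix : φ (cst P q * ind P hA) = cst P q * ind P hA := by rw [hmul, hrat, hindfix]
    rw [hfix] at h2
    have e1 := AEEqFun.coeFn_mul (ind P hA) (φ (ind P hA * ξ))
    rw [hloc ξ A hA] at e1
    have h4 : ⇑(ind P hA) * ⇑(φ (ind P hA * ξ)) =ᵐ[P] ⇑(ind P hA) * ⇑(φ ξ) :=
      e1.symm.trans (AEEqFun.coeFn_mul (ind P hA) (φ ξ))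
    filter_upwards [h2, h4, coeFn_ind hA, AEEqFun.coeFn_mul (cst P q) (ind P hA),
      coeFn_cst (P := P) (q : ℝ)] with ω g2 g4 g3 g5 g6 hω
    have hmem : ω ∈ A := hω
    have hi : ind P hA ω = 1 := by rw [g3]; simp [Set.indicator_of_mem hmem]
    have hval : φ (ind P hA * ξ) ω = φ ξ ω := by
      have g4' : ind P hA ω * φ (ind P hA * ξ) ω = ind P hA ω * φ ξ ω := g4
      rw [hi, one_mul, one_mul] at g4'
      exact g4'
    calc φ ξ ω = φ (ind P hA * ξ) ω := hval.symm
      _ ≤ (cst P q * ind P hA) ω := g2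
      _ = (q : ℝ) := by rw [g5, Pi.mul_apply, g6, hi, mul_one]
  -- symmetric key step
  have key2 : ∀ (ξ : Ω →ₘ[P] ℝ) (q : ℚ), ∀ᵐ ω ∂P, (q : ℝ) ≤ ξ ω → (q : ℝ) ≤ φ ξ ω := by
    intro ξ q
    have h := key (-ξ) (-q)
    filter_upwards [h, AEEqFun.coeFn_neg ξ, AEEqFun.coeFn_neg (φ ξ)] with ω h1 e1 e2 hω
    have hle : (-ξ) ω ≤ ((-q : ℚ) : ℝ) := by
      rw [e1, Pi.neg_apply]
      push_cast
      linarith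
    have := h1 hle
    rw [hneg ξ] at this
    have e2' : (-φ ξ) ω = -(φ ξ ω) := by rw [e2, Pi.neg_apply]
    rw [e2'] at this
    push_cast at this
    linarith
  -- conclusion
  intro ξ
  refine AEEqFun.ext ?_
  have H1 : ∀ᵐ ω ∂P, ∀ q : ℚ, ξ ω ≤ (q : ℝ) → φ ξ ω ≤ (q : ℝ) := ae_all_iff.2 fun q => key ξ q
  have H2 : ∀ᵐ ω ∂P, ∀ q : ℚ, (q : ℝ) ≤ ξ ω → (q : ℝ) ≤ φ ξ ω := ae_all_iff.2 fun q => key2 ξ q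
  filter_upwards [H1, H2] with ω h1 h2
  refine le_antisymm ?_ ?_
  · by_contra h
    push_neg at h
    obtain ⟨q, hq1, hq2⟩ := exists_rat_btwn h
    exact absurd (h1 q hq1.le) (not_le.2 hq2)
  · by_contra h
    push_neg at h
    obtain ⟨q, hq1, hq2⟩ := exists_rat_btwn h
    exact absurd (h2 q hq2.le) (not_le.2 hq1)
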